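/- Let G be a group, Z = Z(G) its center, T a group, X ≤ T a subgroup, α : X → Z a homomorphism, and σ ∈ Aut(G). Consider the action of G × G × T on G ×_Z ((T × Z)/X_α) — the quotient of G × (T × Z)/X_α by the Z-action (identifying [gz, w] with [g, (1,z)w]) — given by (g₁, g₂, t)[g, w] = [g₁ g σ(g₂)⁻¹, (t, 1)w], where X_α := {(x, α(x)) | x ∈ X} ≤ T × Z. Then this action is transitive and the stabilizer of the point [1, (1,1)X_α] is exactly D_{σ, α, X} = {(α(t)σ(g), g, t) | g ∈ G, t ∈ X}; hence G ×_Z (T × Z)/X_α is isomorphic as a (G × G × T)-set to (G × G × T)/D_{σ, α, X}. -/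

import Mathlib

/-- The twisted diagonal subgroup `D_{σ, α, T₀} = {(α(t)σ(g), g, t) | g ∈ G, t ∈ T₀}`
of `G × G × T`, for `σ` an automorphism of `G`, `T₀ ≤ T`, and `α : T₀ → Z(G)`. -/
def twistedDiag {G T : Type*} [Group G] [Group T] (σ : G ≃* G) (T₀ : Subgroup T)
    (α : T₀ →* Subgroup.center G) : Subgroup (G × G × T) where
  carrier := {x | ∃ (g : G) (t : T₀), x = (((α t : G) * σ g, g, (t : T)) : G × G × T)}
  one_mem' := ⟨1, 1, by simp; rfl⟩
  mul_mem' := by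
    rintro x y ⟨g₁, t₁, rfl⟩ ⟨g₂, t₂, rfl⟩
    refine ⟨g₁ * g₂, t₁ * t₂, ?_⟩
    simp only [Prod.mk_mul_mk, map_mul, Subgroup.coe_mul, Prod.mk.injEq]
    exact ⟨(Commute.mul_mul_mul_comm
      (Subgroup.mem_center_iff.mp (α t₂).2 (σ g₁)) _ _), trivial⟩
  inv_mem' := by
    rintro x ⟨g, t, rfl⟩
    refine ⟨g⁻¹, t⁻¹, ?_⟩
    simp only [Prod.inv_mk, map_inv, Subgroup.coe_inv, Prod.mk.injEq]
    refine ⟨?_, trivial⟩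
    rw [mul_inv_rev]
    exact Commute.inv_inv (Subgroup.mem_center_iff.mp (α t).2 (σ g))

section
variable {G T : Type*} [Group G] [Group T]

/-- The graph subgroup `X_α = {(x, α(x)) | x ∈ X} ≤ T × Z(G)`. -/
def graphSub (X : Subgroup T) (α : X →* Subgroup.center G) :
    Subgroup (T × Subgroup.center G) where
  carrier := {p | ∃ x : X, p = ((x : T), α x)}
  one_mem' := ⟨1, by simp; rfl⟩
  mul_mem' := by
    rintro a b ⟨x, rfl⟩ ⟨y, rfl⟩
    exact ⟨x * y, by simp⟩
  inv_mem' := by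
    rintro a ⟨x, rfl⟩
    exact ⟨x⁻¹, by simp⟩

/-- The setoid on `G × (T × Z)/X_α` whose quotient is `G ×_Z (T × Z)/X_α`:
`(g, w) ∼ (g', w')` iff `(g, w) = (g'·z⁻¹, (1, z)·w')` for some `z ∈ Z(G)`. -/
def zSetoid (X : Subgroup T) (α : X →* Subgroup.center G) :
    Setoid (G × ((T × Subgroup.center G) ⧸ graphSub X α)) where
  r p q := ∃ z : Subgroup.center G,
    ((q.1 * (z : G)⁻¹, (((1 : T), z) : T × Subgroup.center G) • q.2) : G × _) = p
  iseqv := by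
    constructor
    · intro p
      refine ⟨1, ?_⟩
      rw [show (((1 : T), (1 : Subgroup.center G)) : T × Subgroup.center G) = 1 from rfl, one_smul]
      simp
    · rintro p q ⟨z, rfl⟩
      refine ⟨z⁻¹, ?_⟩
      rw [smul_smul,
        show (((1 : T), z⁻¹) : T × Subgroup.center G) * ((1 : T), z) = 1 by simp, one_smul]
      simp [mul_assoc]
    · rintro p q r ⟨z₁, rfl⟩ ⟨z₂, rfl⟩
      refine ⟨z₂ * z₁, ?_⟩
      rw [smul_smul,
        show (((1 : T), z₁) : T × Subgroup.center G) * ((1 : T), z₂)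
            = (((1 : T), z₂ * z₁) : T × Subgroup.center G) by
          simp [Prod.ext_iff, mul_comm]; exact Subtype.ext (Subgroup.mem_center_iff.mp z₂.2 _)]
      simp [mul_assoc]
      exact Subgroup.mem_center_iff.mp (z₂⁻¹).2 _

/-- `G ×_Z (T × Z)/X_α`. -/
abbrev fibredProd (X : Subgroup T) (α : X →* Subgroup.center G) : Type _ :=
  Quotient (zSetoid X α)

/-- The action of `(g₁, g₂, t) ∈ G × G × T` on `G ×_Z (T × Z)/X_α`, depending on an
automorphism `σ` of `G`: `(g₁, g₂, t) • [g, w] = [g₁ g σ(g₂)⁻¹, (t, 1) • w]`. -/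
def qSmul (σ : G ≃* G) (X : Subgroup T) (α : X →* Subgroup.center G)
    (a : G × G × T) : fibredProd X α → fibredProd X α :=
  Quotient.map
    (fun p => ((a.1 * p.1 * (σ a.2.1)⁻¹,
      ((a.2.2, (1 : Subgroup.center G)) : T × Subgroup.center G) • p.2) : G × _))
    (by
      rintro p q ⟨z, rfl⟩
      refine ⟨z, ?_⟩
      show ((a.1 * q.1 * (σ a.2.1)⁻¹) * ((z : G))⁻¹,
            (((1 : T), z) : T × Subgroup.center G) •
              (((a.2.2, (1 : Subgroup.center G)) : T × Subgroup.center G) • q.2))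
          = (a.1 * (q.1 * ((z : G))⁻¹) * (σ a.2.1)⁻¹,
             ((a.2.2, (1 : Subgroup.center G)) : T × Subgroup.center G) •
               ((((1 : T), z) : T × Subgroup.center G) • q.2))
      rw [smul_smul, smul_smul,
        show (((1 : T), z) : T × Subgroup.center G) * (a.2.2, (1 : Subgroup.center G))
            = ((a.2.2, (1 : Subgroup.center G)) : T × Subgroup.center G) * ((1 : T), z) by
          simp [Prod.ext_iff]]
      simp only [Prod.mk.injEq, and_true, eq_self_iff_true]
      rw [mul_assoc (a.1 * q.1),
        show (σ a.2.1)⁻¹ * ((z : G))⁻¹ = ((z : G))⁻¹ * (σ a.2.1)⁻¹ from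
          Subgroup.mem_center_iff.mp (z⁻¹).2 _]
      simp [mul_assoc])

/-- The base point `[1, (1, 1)X_α]` of `G ×_Z (T × Z)/X_α`. -/
def basePt (X : Subgroup T) (α : X →* Subgroup.center G) : fibredProd X α :=
  Quotient.mk (zSetoid X α) ((1 : G), QuotientGroup.mk (1 : T × Subgroup.center G))

/-! The orbit map of the base point sends `(g₁, g₂, t)` to `[g₁ σ(g₂)⁻¹, (t, 1)X_α]`. Since
`[g, (t, z)X_α] = [g z, (t, 1)X_α]`, every point is of this form, and `[g, (t, 1)X_α]` is the base
point exactly when `t ∈ X` and `g = α(t)`, which is membership in `D_{σ, α, X}`. -/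

theorem mem_twistedDiag_iff {σ : G ≃* G} {T₀ : Subgroup T} {α : T₀ →* Subgroup.center G}
    {a : G × G × T} :
    a ∈ twistedDiag σ T₀ α ↔ ∃ t : T₀, (t : T) = a.2.2 ∧ (α t : G) = a.1 * (σ a.2.1)⁻¹ := by
  obtain ⟨g₁, g₂, t⟩ := a
  simp only [twistedDiag, Subgroup.mem_mk, Submonoid.mem_mk, Subsemigroup.mem_mk,
    Set.mem_ofPred_eq, Prod.mk.injEq, eq_mul_inv_iff_mul_eq]
  exact ⟨fun ⟨_, x, h₁, rfl, h₃⟩ => ⟨x, h₃.symm, h₁.symm⟩,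
    fun ⟨x, h₃, h₁⟩ => ⟨g₂, x, h₁.symm, rfl, h₃.symm⟩⟩

section fibredProd

variable {X : Subgroup T} {α : X →* Subgroup.center G}

theorem mem_graphSub_iff {p : T × Subgroup.center G} :
    p ∈ graphSub X α ↔ ∃ x : X, (x : T) = p.1 ∧ α x = p.2 := by
  simp [graphSub, Prod.ext_iff, eq_comm]

theorem fibredProd.mk_mul_center (g : G) (z : Subgroup.center G)
    (w : (T × Subgroup.center G) ⧸ graphSub X α) :
    Quotient.mk (zSetoid X α) (g * z, w) = Quotient.mk _ (g, ((1 : T), z) • w) :=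
  Quotient.sound ⟨z⁻¹, by simp [smul_smul, Prod.mk_one_one]⟩

theorem qSmul_basePt (σ : G ≃* G) (a : G × G × T) :
    qSmul σ X α a (basePt X α) =
      Quotient.mk _ (a.1 * (σ a.2.1)⁻¹, QuotientGroup.mk (a.2.2, (1 : Subgroup.center G))) := by
  simp [qSmul, basePt]

theorem fibredProd.mk_eq_basePt_iff (g : G) (t : T) :
    Quotient.mk (zSetoid X α) (g, QuotientGroup.mk (t, 1)) = basePt X α ↔
      ∃ x : X, (x : T) = t ∧ (α x : G) = g := by
  have hcoset (z : Subgroup.center G) :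
      ((1 : T), z) • (QuotientGroup.mk 1 : (T × Subgroup.center G) ⧸ graphSub X α) =
        QuotientGroup.mk (t, 1) ↔ ∃ x : X, (x : T) = t ∧ α x = z⁻¹ := by
    rw [MulAction.Quotient.smul_mk, smul_eq_mul, mul_one, QuotientGroup.eq, mem_graphSub_iff]
    simp
  simp only [basePt, Quotient.eq, zSetoid, Prod.mk.injEq, hcoset, one_mul]
  constructor
  · rintro ⟨z, rfl, x, hx, hαx⟩
    exact ⟨x, hx, by rw [hαx]; rfl⟩
  · rintro ⟨x, hx, rfl⟩
    exact ⟨(α x)⁻¹, by simp, x, hx, by simp⟩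

theorem exists_qSmul_basePt_eq (σ : G ≃* G) (m : fibredProd X α) :
    ∃ a : G × G × T, qSmul σ X α a (basePt X α) = m := by
  induction m using Quotient.inductionOn with | h p => ?_
  obtain ⟨g, w⟩ := p
  induction w using QuotientGroup.induction_on with | H p => ?_
  obtain ⟨t, z⟩ := p
  refine ⟨(g * z, 1, t), ?_⟩
  rw [qSmul_basePt, map_one, inv_one, mul_one, fibredProd.mk_mul_center,
    MulAction.Quotient.smul_mk]
  simp

theorem qSmul_basePt_eq_basePt_iff (σ : G ≃* G) (a : G × G × T) :
    qSmul σ X α a (basePt X α) = basePt X α ↔ a ∈ twistedDiag σ X α := by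
  rw [qSmul_basePt, fibredProd.mk_eq_basePt_iff, mem_twistedDiag_iff]

end fibredProd

/-- The `G × G × T`-action on `G ×_Z (T × Z)/X_α` given by
`(g₁, g₂, t) • [g, w] = [g₁ g σ(g₂)⁻¹, (t, 1) • w]` is transitive, and the stabilizer of the
base point `[1, (1,1)X_α]` is exactly the twisted diagonal subgroup `D_{σ, α, X}`; hence
`G ×_Z (T × Z)/X_α ≅ (G × G × T)/D_{σ, α, X}` as `(G × G × T)`-sets. -/
theorem fibredProd_transitive_and_stabilizer (σ : G ≃* G) (X : Subgroup T)
    (α : X →* Subgroup.center G) :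
    (∀ m : fibredProd X α, ∃ a : G × G × T, qSmul σ X α a (basePt X α) = m) ∧
    {a : G × G × T | qSmul σ X α a (basePt X α) = basePt X α} =
      (twistedDiag σ X α : Set (G × G × T)) :=
  ⟨exists_qSmul_basePt_eq σ, Set.ext fun a => qSmul_basePt_eq_basePt_iff σ a⟩

end
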